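/- Let G be a finite simple (C4,C6,P6)-free graph containing an induced copy of F2 with vertices labelled v1,...,v5,t,x,y (so C = v1v2v3v4v5 is the underlying induced 5-cycle, x ∈ S(4,5), y ∈ S(2,3) and t ∈ S(5,1,2) with respect to C). Then, with respect to C: S(1) = S(3) = S(4) = ∅, so that S_1 = S(2) ∪ S(5); at least one of S(2) and S(5) is empty; and S(3,4) = S(1,2) = S(5,1) = ∅, so that S_2 = S(2,3) ∪ S(4,5). -/

import Mathlib

open SimpleGraph

/-- `G` contains no induced subgraph isomorphic to `H` (`H`-freeness, via graph embeddings). -/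
def Free {V W : Type*} (G : SimpleGraph V) (H : SimpleGraph W) : Prop :=
  IsEmpty (H ↪g G)

/-- `v 1, v 2, v 3, v 4, v 0` are the vertices `v₁,…,v₅` of an induced 5-cycle of `G`
(in cyclic order, indices taken modulo 5, with `v 0` playing the role of `v₅`). -/
def IsInducedC5 {V : Type*} (G : SimpleGraph V) (v : ZMod 5 → V) : Prop :=
  Function.Injective v ∧ ∀ i j, G.Adj (v i) (v j) ↔ (j = i + 1 ∨ i = j + 1)

/-- `S(X)`: the vertices outside the cycle whose neighbourhood on the cycle is exactly
`{v i : i ∈ X}`. -/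
def cycS {V : Type*} (G : SimpleGraph V) (v : ZMod 5 → V) (X : Set (ZMod 5)) : Set V :=
  {u | (∀ i, u ≠ v i) ∧ ∀ i, (G.Adj u (v i) ↔ i ∈ X)}

/-- `S_j`: the vertices outside the cycle with exactly `j` neighbours on the cycle. -/
def cycSdeg {V : Type*} (G : SimpleGraph V) (v : ZMod 5 → V) (j : ℕ) : Set V :=
  {u | (∀ i, u ≠ v i) ∧ {i : ZMod 5 | G.Adj u (v i)}.ncard = j}

/-- `A` is complete to `B`: every vertex of `A` is adjacent to every vertex of `B`. -/
def CompleteTo {V : Type*} (G : SimpleGraph V) (A B : Set V) : Prop :=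
  ∀ a ∈ A, ∀ b ∈ B, G.Adj a b

/-- `A` is anti-complete to `B`: there are no edges between `A` and `B`. -/
def AntiCompleteTo {V : Type*} (G : SimpleGraph V) (A B : Set V) : Prop :=
  ∀ a ∈ A, ∀ b ∈ B, ¬ G.Adj a b

/-- `K` is a clique cutset of `G`: a clique whose removal increases the number of
connected components. -/
def IsCliqueCutset {V : Type*} (G : SimpleGraph V) (K : Set V) : Prop :=
  G.IsClique K ∧
    Nat.card G.ConnectedComponent < Nat.card (G.induce Kᶜ).ConnectedComponent

/-- An atom is a graph with no clique cutset. -/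
def IsGraphAtom {V : Type*} (G : SimpleGraph V) : Prop :=
  ∀ K : Set V, ¬ IsCliqueCutset G K

/-- A strong atom: an atom with no universal vertex and no pair of (true) twins. -/
def IsStrongAtom {V : Type*} (G : SimpleGraph V) : Prop :=
  IsGraphAtom G ∧ (∀ u : V, ¬ ∀ w, w ≠ u → G.Adj u w) ∧
    ∀ u w : V, G.Adj u w → ¬ ∀ z, z ≠ u → z ≠ w → (G.Adj z u ↔ G.Adj z w)

/-- The graph `F₁` of the paper: vertices `0,…,4` are `v₁,…,v₅` (a 5-cycle), `5 = x`,
`6 = y`, `7 = z`; edges: the 5-cycle, `yv₂, yv₃, zv₄, zv₅, xv₃, xv₄, xy, xz`. -/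
def F1 : SimpleGraph (Fin 8) :=
  SimpleGraph.fromRel (fun a b => (a, b) ∈
    [((0 : Fin 8), (1 : Fin 8)), (1, 2), (2, 3), (3, 4), (4, 0),
     (6, 1), (6, 2), (7, 3), (7, 4), (5, 2), (5, 3), (5, 6), (5, 7)])

/-- The graph `F₂` of the paper: vertices `0,…,4` are `v₁,…,v₅` (a 5-cycle), `5 = t`,
`6 = x`, `7 = y`; edges: the 5-cycle, `yv₂, yv₃, xv₄, xv₅, tv₅, tv₁, tv₂, tx, ty`. -/
def F2 : SimpleGraph (Fin 8) :=
  SimpleGraph.fromRel (fun a b => (a, b) ∈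
    [((0 : Fin 8), (1 : Fin 8)), (1, 2), (2, 3), (3, 4), (4, 0),
     (7, 1), (7, 2), (6, 3), (6, 4), (5, 4), (5, 0), (5, 1), (5, 6), (5, 7)])

/-- The underlying 5-cycle `v₁,…,v₅` (as a map `ZMod 5 → V`, with `v 0 = v₅`) of an
(induced) copy of `F₁` or `F₂` given by a vertex map `f : Fin 8 → V`. -/
def underlyingC5 {V : Type*} (f : Fin 8 → V) : ZMod 5 → V :=
  fun i => f ⟨(i - 1).val, by have := ZMod.val_lt (i - 1); omega⟩

/-!
Everything rests on one configuration. On the induced path `v(k+2) v(k+3) v(k+4) v(k)` of the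
5-cycle there are no two outside vertices `u`, `x` attached to its ends only (`u` to `v(k+2)`, `x`
to `v(k)`): if `u ~ x` they close an induced `C₆`, otherwise they extend the path to an induced
`P₆`. Pairing `x ∈ S(4,5)` or `y ∈ S(2,3)` with a vertex of `S(1)`, `S(3)`, `S(4)`, `S(3,4)`,
`S(1,2)` or `S(5,1)` produces this configuration, and so does a vertex of `S(2)` paired with one
of `S(5)`. Finally `C₄`-freeness makes the two neighbours of a vertex of `S_2` consecutive on the
cycle.
-/

section InducedSubgraphs

variable {V W : Type*} {G : SimpleGraph V} {H : SimpleGraph W}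

theorem Free.false_of_adj_iff (hG : _root_.Free G H) {f : W → V} (hf : Function.Injective f)
    (hadj : ∀ i j, G.Adj (f i) (f j) ↔ H.Adj i j) : False :=
  hG.false ⟨⟨f, hf⟩, hadj _ _⟩

theorem injective_of_adj_iff {f : W → V} (hadj : ∀ i j, G.Adj (f i) (f j) ↔ H.Adj i j)
    (hH : ∀ i j, i ≠ j → ∃ k, ¬(H.Adj i k ↔ H.Adj j k)) : Function.Injective f := by
  intro i j hij
  by_contra hne
  obtain ⟨k, hk⟩ := hH i j hne
  exact hk (by rw [← hadj, ← hadj, hij])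

theorem adj_iff_of_forall_lt [LinearOrder W] {f : W → V}
    (hlt : ∀ i j, i < j → (G.Adj (f i) (f j) ↔ H.Adj i j)) (i j : W) :
    G.Adj (f i) (f j) ↔ H.Adj i j := by
  rcases lt_trichotomy i j with hij | rfl | hij
  · exact hlt i j hij
  · simp
  · rw [G.adj_comm, H.adj_comm]
    exact hlt j i hij

theorem Free.false_of_inducedC4 (hG : _root_.Free G (cycleGraph 4)) {a b c d : V}
    (hab : G.Adj a b) (hbc : G.Adj b c) (hcd : G.Adj c d) (hda : G.Adj d a)
    (hac : ¬G.Adj a c) (hbd : ¬G.Adj b d) (hac_ne : a ≠ c) (hbd_ne : b ≠ d) : False := by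
  have hadj := adj_iff_of_forall_lt (G := G) (H := cycleGraph 4) (f := ![a, b, c, d]) <| by
    intro i j hij
    fin_cases i <;> fin_cases j <;> simp +decide [hab, hbc, hcd, hda.symm, hac, hbd] at hij ⊢
  refine hG.false_of_adj_iff (f := ![a, b, c, d]) ?_ hadj
  intro i j hij
  fin_cases i <;> fin_cases j <;>
    simp [hab.ne, hbc.ne, hcd.ne, hda.ne, hab.ne', hbc.ne', hcd.ne', hda.ne', hac_ne, hbd_ne,
      hac_ne.symm, hbd_ne.symm] at hij ⊢

theorem Free.false_of_inducedC6 (hG : _root_.Free G (cycleGraph 6)) {a b c d e f : V}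
    (hab : G.Adj a b) (hbc : G.Adj b c) (hcd : G.Adj c d) (hde : G.Adj d e) (hef : G.Adj e f)
    (hfa : G.Adj f a) (hac : ¬G.Adj a c) (had : ¬G.Adj a d) (hae : ¬G.Adj a e)
    (hbd : ¬G.Adj b d) (hbe : ¬G.Adj b e) (hbf : ¬G.Adj b f) (hce : ¬G.Adj c e)
    (hcf : ¬G.Adj c f) (hdf : ¬G.Adj d f) : False := by
  have hadj := adj_iff_of_forall_lt (G := G) (H := cycleGraph 6) (f := ![a, b, c, d, e, f]) <| by
    intro i j hij
    fin_cases i <;> fin_cases j <;>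
      simp +decide [hab, hbc, hcd, hde, hef, hfa.symm, hac, had, hae, hbd, hbe, hbf, hce, hcf,
        hdf] at hij ⊢
  exact hG.false_of_adj_iff (injective_of_adj_iff hadj (by decide)) hadj

theorem Free.false_of_inducedP6 (hG : _root_.Free G (pathGraph 6)) {a b c d e f : V}
    (hab : G.Adj a b) (hbc : G.Adj b c) (hcd : G.Adj c d) (hde : G.Adj d e) (hef : G.Adj e f)
    (hac : ¬G.Adj a c) (had : ¬G.Adj a d) (hae : ¬G.Adj a e) (haf : ¬G.Adj a f)
    (hbd : ¬G.Adj b d) (hbe : ¬G.Adj b e) (hbf : ¬G.Adj b f) (hce : ¬G.Adj c e)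
    (hcf : ¬G.Adj c f) (hdf : ¬G.Adj d f) : False := by
  have hadj := adj_iff_of_forall_lt (G := G) (H := pathGraph 6) (f := ![a, b, c, d, e, f]) <| by
    intro i j hij
    fin_cases i <;> fin_cases j <;>
      simp +decide [pathGraph_adj, hab, hbc, hcd, hde, hef, hac, had, hae, haf, hbd, hbe, hbf, hce,
        hcf, hdf] at hij ⊢
  have hinj := injective_of_adj_iff hadj (by simp only [pathGraph_adj]; decide)
  exact hG.false_of_adj_iff hinj hadj

end InducedSubgraphs

namespace IsInducedC5

variable {V : Type*} {G : SimpleGraph V} {v : ZMod 5 → V}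

theorem adj (hv : IsInducedC5 G v) (i j : ZMod 5)
    (h : j - i = 1 ∨ i - j = 1 := by simp +decide) : G.Adj (v i) (v j) := by
  rw [hv.2, ← sub_eq_iff_eq_add', ← sub_eq_iff_eq_add']
  exact h

theorem not_adj (hv : IsInducedC5 G v) (i j : ZMod 5)
    (h : ¬(j - i = 1 ∨ i - j = 1) := by simp +decide) : ¬G.Adj (v i) (v j) := by
  rw [hv.2, ← sub_eq_iff_eq_add', ← sub_eq_iff_eq_add']
  exact h

theorem ne (hv : IsInducedC5 G v) (i j : ZMod 5) (h : i ≠ j := by simp +decide) : v i ≠ v j :=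
  hv.1.ne h

end IsInducedC5

section CycleNeighbourhoods

variable {V : Type*} {G : SimpleGraph V} {v : ZMod 5 → V} {X : Set (ZMod 5)} {u : V}

theorem adj_of_mem_cycS (hu : u ∈ cycS G v X) (i : ZMod 5) (hi : i ∈ X := by simp +decide) :
    G.Adj u (v i) :=
  (hu.2 i).2 hi

theorem not_adj_of_mem_cycS (hu : u ∈ cycS G v X) (i : ZMod 5) (hi : i ∉ X := by simp +decide) :
    ¬G.Adj u (v i) :=
  fun h => hi ((hu.2 i).1 h)

theorem ne_of_mem_cycS (hu : u ∈ cycS G v X) (i : ZMod 5) : u ≠ v i :=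
  hu.1 i

theorem mem_cycS_iff : u ∈ cycS G v X ↔ (∀ i, u ≠ v i) ∧ {i | G.Adj u (v i)} = X := by
  simp [cycS, Set.ext_iff]

theorem mem_cycSdeg_iff {n : ℕ} :
    u ∈ cycSdeg G v n ↔ ∃ X : Set (ZMod 5), X.ncard = n ∧ u ∈ cycS G v X := by
  simp only [cycSdeg, mem_cycS_iff, Set.mem_ofPred_eq]
  constructor
  · rintro ⟨hu, hn⟩
    exact ⟨_, hn, hu, rfl⟩
  · rintro ⟨X, hn, hu, rfl⟩
    exact ⟨hu, hn⟩

theorem cycSdeg_one_eq_iUnion : cycSdeg G v 1 = ⋃ k, cycS G v {k} := by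
  ext u
  simp only [mem_cycSdeg_iff, Set.ncard_eq_one, Set.mem_iUnion]
  constructor
  · rintro ⟨X, ⟨k, rfl⟩, hu⟩
    exact ⟨k, hu⟩
  · rintro ⟨k, hu⟩
    exact ⟨_, ⟨k, rfl⟩, hu⟩

theorem cycS_pair_add_two_eq_empty (hC4 : _root_.Free G (cycleGraph 4)) (hv : IsInducedC5 G v)
    (k : ZMod 5) : cycS G v {k, k + 2} = ∅ :=
  Set.eq_empty_of_forall_notMem fun u hu =>
    hC4.false_of_inducedC4 (adj_of_mem_cycS hu k) (hv.adj k (k + 1)) (hv.adj _ (k + 2))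
      (adj_of_mem_cycS hu _).symm (not_adj_of_mem_cycS hu (k + 1)) (hv.not_adj _ _)
      (ne_of_mem_cycS hu _) (hv.ne _ _)

theorem cycSdeg_two_eq_iUnion (hC4 : _root_.Free G (cycleGraph 4)) (hv : IsInducedC5 G v) :
    cycSdeg G v 2 = ⋃ k, cycS G v {k, k + 1} := by
  ext u
  simp only [mem_cycSdeg_iff, Set.ncard_eq_two, Set.mem_iUnion]
  constructor
  · rintro ⟨X, ⟨i, j, hij, rfl⟩, hu⟩
    obtain rfl | rfl | rfl | rfl : j = i + 1 ∨ i = j + 1 ∨ j = i + 2 ∨ i = j + 2 := by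
      clear hu; revert i j; decide
    · exact ⟨i, hu⟩
    · exact ⟨j, Set.pair_comm _ _ ▸ hu⟩
    · rw [cycS_pair_add_two_eq_empty hC4 hv] at hu
      exact absurd hu (Set.notMem_empty u)
    · rw [Set.pair_comm, cycS_pair_add_two_eq_empty hC4 hv] at hu
      exact absurd hu (Set.notMem_empty u)
  · rintro ⟨k, hu⟩
    exact ⟨_, ⟨k, k + 1, by simp +decide, rfl⟩, hu⟩

theorem false_of_adj_path_ends (hC6 : _root_.Free G (cycleGraph 6))
    (hP6 : _root_.Free G (pathGraph 6)) (hv : IsInducedC5 G v) {k : ZMod 5} {u x : V}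
    (hu2 : G.Adj u (v (k + 2))) (hu3 : ¬G.Adj u (v (k + 3))) (hu4 : ¬G.Adj u (v (k + 4)))
    (hu0 : ¬G.Adj u (v k)) (hx0 : G.Adj x (v k)) (hx2 : ¬G.Adj x (v (k + 2)))
    (hx3 : ¬G.Adj x (v (k + 3))) (hx4 : ¬G.Adj x (v (k + 4))) : False := by
  by_cases hux : G.Adj u x
  · exact hC6.false_of_inducedC6 hux hx0 (hv.adj k (k + 4)) (hv.adj _ (k + 3)) (hv.adj _ (k + 2))
      hu2.symm hu0 hu4 hu3 hx4 hx3 hx2 (hv.not_adj _ _) (hv.not_adj _ _) (hv.not_adj _ _)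
  · exact hP6.false_of_inducedP6 hu2 (hv.adj _ (k + 3)) (hv.adj _ (k + 4)) (hv.adj _ k) hx0.symm
      hu3 hu4 hu0 hux (hv.not_adj _ _) (hv.not_adj _ _) (hx2 ∘ Adj.symm) (hv.not_adj _ _)
      (hx3 ∘ Adj.symm) (hx4 ∘ Adj.symm)

theorem cycS_eq_empty_or_cycS_eq_empty (hC6 : _root_.Free G (cycleGraph 6))
    (hP6 : _root_.Free G (pathGraph 6)) (hv : IsInducedC5 G v) (k : ZMod 5) {X Y : Set (ZMod 5)}
    (hX : k + 2 ∈ X ∧ k + 3 ∉ X ∧ k + 4 ∉ X ∧ k ∉ X := by simp +decide)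
    (hY : k ∈ Y ∧ k + 2 ∉ Y ∧ k + 3 ∉ Y ∧ k + 4 ∉ Y := by simp +decide) :
    cycS G v X = ∅ ∨ cycS G v Y = ∅ := by
  by_contra! ⟨⟨u, hu⟩, ⟨x, hx⟩⟩
  exact false_of_adj_path_ends hC6 hP6 hv (adj_of_mem_cycS hu _ hX.1)
    (not_adj_of_mem_cycS hu _ hX.2.1) (not_adj_of_mem_cycS hu _ hX.2.2.1)
    (not_adj_of_mem_cycS hu _ hX.2.2.2) (adj_of_mem_cycS hx _ hY.1)
    (not_adj_of_mem_cycS hx _ hY.2.1) (not_adj_of_mem_cycS hx _ hY.2.2.1)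
    (not_adj_of_mem_cycS hx _ hY.2.2.2)

end CycleNeighbourhoods

theorem Set.iUnion_zmod_five {α : Type*} (s : ZMod 5 → Set α) :
    ⋃ k, s k = s 0 ∪ s 1 ∪ s 2 ∪ s 3 ∪ s 4 := by
  ext a
  simp only [Set.mem_iUnion, Set.mem_union]
  constructor
  · rintro ⟨k, hk⟩
    have hk5 : k = 0 ∨ k = 1 ∨ k = 2 ∨ k = 3 ∨ k = 4 := by clear hk; revert k; decide
    rcases hk5 with rfl | rfl | rfl | rfl | rfl <;> simp [hk]
  · rintro ((((h | h) | h) | h) | h) <;> exact ⟨_, h⟩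

instance : DecidableRel F2.Adj := fun a b =>
  decidable_of_iff _ (SimpleGraph.fromRel_adj _ a b).symm

section UnderlyingCycle

variable {V : Type*} {G : SimpleGraph V}

theorem isInducedC5_underlyingC5 (f : F2 ↪g G) : IsInducedC5 G (underlyingC5 f) := by
  refine ⟨fun i j hij => ?_, fun i j => ?_⟩
  · have h : (i - 1).val = (j - 1).val := congrArg (@Fin.val 8) (f.injective hij)
    simpa using ZMod.val_injective 5 h
  · simp only [underlyingC5, f.map_adj_iff]
    revert i j
    decide

theorem mem_cycS_underlyingC5 (f : F2 ↪g G) {a : Fin 8} (ha : 5 ≤ a.val) {X : Set (ZMod 5)}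
    (hX : ∀ i : ZMod 5,
      F2.Adj a ⟨(i - 1).val, by have := ZMod.val_lt (i - 1); omega⟩ ↔ i ∈ X) :
    f a ∈ cycS G (underlyingC5 f) X := by
  refine ⟨fun i h => ?_, fun i => ?_⟩
  · have h' : a.val = (i - 1).val := congrArg (@Fin.val 8) (f.injective h)
    have := ZMod.val_lt (i - 1)
    omega
  · simp only [underlyingC5, f.map_adj_iff]
    exact hX i

end UnderlyingCycle

theorem stmt_14_general {V : Type*} (G : SimpleGraph V)
    (hC4 : _root_.Free G (cycleGraph 4)) (hC6 : _root_.Free G (cycleGraph 6))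
    (hP6 : _root_.Free G (pathGraph 6))
    (f : F2 ↪g G) :
    -- with respect to the underlying 5-cycle `C = v₁v₂v₃v₄v₅` of the copy of `F₂`
    -- (here `v i` is `vᵢ`, indices mod 5, so `v 0 = v₅`):
    (cycS G (underlyingC5 (f : Fin 8 → V)) {1} = ∅ ∧
      cycS G (underlyingC5 (f : Fin 8 → V)) {3} = ∅ ∧
      cycS G (underlyingC5 (f : Fin 8 → V)) {4} = ∅) ∧
    cycSdeg G (underlyingC5 (f : Fin 8 → V)) 1 =
      cycS G (underlyingC5 (f : Fin 8 → V)) {2} ∪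
        cycS G (underlyingC5 (f : Fin 8 → V)) {5} ∧
    (cycS G (underlyingC5 (f : Fin 8 → V)) {2} = ∅ ∨
      cycS G (underlyingC5 (f : Fin 8 → V)) {5} = ∅) ∧
    (cycS G (underlyingC5 (f : Fin 8 → V)) {3, 4} = ∅ ∧
      cycS G (underlyingC5 (f : Fin 8 → V)) {1, 2} = ∅ ∧
      cycS G (underlyingC5 (f : Fin 8 → V)) {5, 1} = ∅) ∧
    cycSdeg G (underlyingC5 (f : Fin 8 → V)) 2 =
      cycS G (underlyingC5 (f : Fin 8 → V)) {2, 3} ∪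
        cycS G (underlyingC5 (f : Fin 8 → V)) {4, 5} := by
  set v := underlyingC5 (f : Fin 8 → V)
  have hv : IsInducedC5 G v := isInducedC5_underlyingC5 f
  have hx : (cycS G v {4, 0}).Nonempty := ⟨f 6, mem_cycS_underlyingC5 f (by decide)
    (by simp only [Set.mem_insert_iff, Set.mem_singleton_iff]; decide)⟩
  have hy : (cycS G v {2, 3}).Nonempty := ⟨f 7, mem_cycS_underlyingC5 f (by decide)
    (by simp only [Set.mem_insert_iff, Set.mem_singleton_iff]; decide)⟩
  have h1 : cycS G v {1} = ∅ :=
    (cycS_eq_empty_or_cycS_eq_empty hC6 hP6 hv 4).resolve_right hx.ne_empty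
  have h3 : cycS G v {3} = ∅ :=
    (cycS_eq_empty_or_cycS_eq_empty hC6 hP6 hv 3).resolve_left hx.ne_empty
  have h4 : cycS G v {4} = ∅ :=
    (cycS_eq_empty_or_cycS_eq_empty hC6 hP6 hv 2).resolve_right hy.ne_empty
  have h34 : cycS G v {3, 4} = ∅ :=
    (cycS_eq_empty_or_cycS_eq_empty hC6 hP6 hv 3).resolve_left hx.ne_empty
  have h12 : cycS G v {1, 2} = ∅ :=
    (cycS_eq_empty_or_cycS_eq_empty hC6 hP6 hv 1).resolve_left hy.ne_empty
  have h51 : cycS G v {5, 1} = ∅ :=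
    (cycS_eq_empty_or_cycS_eq_empty hC6 hP6 hv 4).resolve_right hx.ne_empty
  have h25 : cycS G v {2} = ∅ ∨ cycS G v {5} = ∅ :=
    cycS_eq_empty_or_cycS_eq_empty hC6 hP6 hv 0
  have hdeg1 : cycSdeg G v 1 = cycS G v {5} ∪ cycS G v {1} ∪ cycS G v {2} ∪ cycS G v {3} ∪
      cycS G v {4} := cycSdeg_one_eq_iUnion.trans (Set.iUnion_zmod_five _)
  have hdeg2 : cycSdeg G v 2 = cycS G v {5, 1} ∪ cycS G v {1, 2} ∪ cycS G v {2, 3} ∪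
      cycS G v {3, 4} ∪ cycS G v {4, 5} :=
    (cycSdeg_two_eq_iUnion hC4 hv).trans (Set.iUnion_zmod_five _)
  refine ⟨⟨h1, h3, h4⟩, ?_, h25, ⟨h34, h12, h51⟩, ?_⟩
  · rw [hdeg1, h1, h3, h4]
    simp [Set.union_comm]
  · rw [hdeg2, h51, h12, h34]
    simp

theorem stmt_14 {V : Type*} [Fintype V] (G : SimpleGraph V)
    (hC4 : _root_.Free G (cycleGraph 4)) (hC6 : _root_.Free G (cycleGraph 6))
    (hP6 : _root_.Free G (pathGraph 6))
    (f : F2 ↪g G) :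
    -- with respect to the underlying 5-cycle `C = v₁v₂v₃v₄v₅` of the copy of `F₂`
    -- (here `v i` is `vᵢ`, indices mod 5, so `v 0 = v₅`):
    (cycS G (underlyingC5 (f : Fin 8 → V)) {1} = ∅ ∧
      cycS G (underlyingC5 (f : Fin 8 → V)) {3} = ∅ ∧
      cycS G (underlyingC5 (f : Fin 8 → V)) {4} = ∅) ∧
    cycSdeg G (underlyingC5 (f : Fin 8 → V)) 1 =
      cycS G (underlyingC5 (f : Fin 8 → V)) {2} ∪
        cycS G (underlyingC5 (f : Fin 8 → V)) {5} ∧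
    (cycS G (underlyingC5 (f : Fin 8 → V)) {2} = ∅ ∨
      cycS G (underlyingC5 (f : Fin 8 → V)) {5} = ∅) ∧
    (cycS G (underlyingC5 (f : Fin 8 → V)) {3, 4} = ∅ ∧
      cycS G (underlyingC5 (f : Fin 8 → V)) {1, 2} = ∅ ∧
      cycS G (underlyingC5 (f : Fin 8 → V)) {5, 1} = ∅) ∧
    cycSdeg G (underlyingC5 (f : Fin 8 → V)) 2 =
      cycS G (underlyingC5 (f : Fin 8 → V)) {2, 3} ∪
        cycS G (underlyingC5 (f : Fin 8 → V)) {4, 5} :=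
  stmt_14_general G hC4 hC6 hP6 f
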